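/- In a (3,3)-loom (A,B), the conditions (i) |V| = 9, (ii) ν(A) = 3, and (iii) for all disjoint e, f ∈ A, V \ (e∪f) ∈ A, are pairwise equivalent. -/

import Mathlib

open Finset

variable {V : Type*} [DecidableEq V]

/-- The vertex set of a hypergraph: the union of its edges. -/
def vertsH (H : Set (Finset V)) : Set V := ⋃ e ∈ H, (e : Set V)

/-- `c` is a cover of the hypergraph `H`: it meets every edge. -/
def IsCoverH (H : Set (Finset V)) (c : Finset V) : Prop := ∀ e ∈ H, (c ∩ e).Nonempty

/-- The covering number of `H` equals `k`. -/
def CoverNumIs (H : Set (Finset V)) (k : ℕ) : Prop :=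
  (∃ c, IsCoverH H c ∧ c.card = k) ∧ ∀ c, IsCoverH H c → k ≤ c.card

/-- `Ck H k` is the set of covers of `H` of size exactly `k`. -/
def Ck (H : Set (Finset V)) (k : ℕ) : Set (Finset V) := {c | c.card = k ∧ IsCoverH H c}

/-- `H` is `r`-uniform. -/
def UniformH (H : Set (Finset V)) (r : ℕ) : Prop := ∀ e ∈ H, e.card = r

/-- Orthogonality of hypergraphs: every pair of edges meets in exactly one vertex. -/
def OrthH (A B : Set (Finset V)) : Prop := ∀ a ∈ A, ∀ b ∈ B, (a ∩ b).card = 1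

/-- An `(r,s)`-loom. -/
def IsLoom (r s : ℕ) (A B : Set (Finset V)) : Prop :=
  1 ≤ r ∧ 1 ≤ s ∧ OrthH A B ∧ UniformH A r ∧ UniformH B s ∧
    CoverNumIs A s ∧ CoverNumIs B r ∧ A = Ck B r ∧ B = Ck A s
/-- `M` is a matching of `H`: a set of pairwise disjoint edges of `H`. -/
def IsMatchingH (H : Set (Finset V)) (M : Finset (Finset V)) : Prop :=
  ↑M ⊆ H ∧ (M : Set (Finset V)).Pairwise (fun e f => Disjoint e f)

/-- The matching number of `H` equals `n`. -/
def MatchNumIs (H : Set (Finset V)) (n : ℕ) : Prop :=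
  (∃ M, IsMatchingH H M ∧ M.card = n) ∧ ∀ M, IsMatchingH H M → M.card ≤ n

/-!
By orthogonality an edge `b ∈ B` meets every edge of a matching `M` of `A` in exactly one vertex,
so `|b ∩ ⋃ M| = |M|`; and `ν(A) ≤ τ(A) = 3`.

If `ν(A) = 3`, the union of a matching of size `3` has `9` vertices and contains every edge of `B`.
Every vertex of an edge of `A`, being a vertex of a minimum cover of `B`, lies on an edge of `B`,
so that union is all of `V`. If `|V| = 9` and `e, f ∈ A` are disjoint, then `g = V \ (e ∪ f)` has
three vertices and meets every `b ∈ B`, because `|b ∩ (e ∪ f)| = 2 < 3`; hence `g ∈ C₃(B) = A`.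
Finally, `A` has two disjoint edges (an edge meeting all others would be a `3`-cover of `A`, hence
an edge of `B` meeting itself in one vertex), and with `g` they form a matching of size `3`.
-/

section Hypergraph

variable {α : Type*} {H : Set (Finset α)} {M : Finset (Finset α)} {c e : Finset α} {v : α}

@[simp]
theorem mem_vertsH : v ∈ vertsH H ↔ ∃ e ∈ H, v ∈ e := by
  simp [vertsH]

theorem vertsH_subset_iff {s : Set α} : vertsH H ⊆ s ↔ ∀ e ∈ H, (e : Set α) ⊆ s :=
  Set.iUnion₂_subset_iff

theorem coe_subset_vertsH (he : e ∈ H) : (e : Set α) ⊆ vertsH H :=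
  vertsH_subset_iff.mp subset_rfl e he

theorem CoverNumIs.nonempty [DecidableEq α] {k : ℕ} (h : CoverNumIs H k) (hk : k ≠ 0) :
    H.Nonempty := by
  by_contra hH
  rw [Set.not_nonempty_iff_eq_empty] at hH
  have := h.2 ∅ (by simp [IsCoverH, hH])
  simp_all

theorem IsCoverH.mem_vertsH_of_minimal [DecidableEq α] (hc : IsCoverH H c)
    (hmin : ∀ c', IsCoverH H c' → c.card ≤ c'.card) (hv : v ∈ c) : v ∈ vertsH H := by
  have hnot : ¬ IsCoverH H (c.erase v) := fun h' => by
    have := hmin _ h'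
    rw [card_erase_of_mem hv] at this
    have := card_pos.mpr ⟨v, hv⟩
    omega
  obtain ⟨e, he, hmiss⟩ : ∃ e ∈ H, ¬ (c.erase v ∩ e).Nonempty := by
    simpa [IsCoverH] using hnot
  obtain ⟨w, hw⟩ := hc e he
  rw [mem_inter] at hw
  obtain rfl : w = v := by
    by_contra hwv
    exact hmiss ⟨w, mem_inter.mpr ⟨mem_erase.mpr ⟨hwv, hw.1⟩, hw.2⟩⟩
  exact mem_vertsH.mpr ⟨e, he, hw.2⟩

theorem IsMatchingH.card_le_of_isCoverH [DecidableEq α] (hM : IsMatchingH H M)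
    (hc : IsCoverH H c) : M.card ≤ c.card :=
  card_le_card_of_forall_subsingleton (fun e v => v ∈ e)
    (fun e he => by
      obtain ⟨v, hv⟩ := hc e (hM.1 he)
      exact ⟨v, mem_inter.mp hv⟩)
    (fun _ _ e he f hf => by_contra fun hef =>
      disjoint_left.mp (hM.2 he.1 hf.1 hef) he.2 hf.2)

theorem IsMatchingH.card_biUnion [DecidableEq α] {r : ℕ} (hM : IsMatchingH H M)
    (hH : UniformH H r) : (M.biUnion id).card = M.card * r := by
  rw [Finset.card_biUnion (t := id) hM.2]
  exact sum_const_nat fun e he => hH e (hM.1 he)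

theorem IsMatchingH.coe_biUnion_subset [DecidableEq α] (hM : IsMatchingH H M) :
    ((M.biUnion id : Finset α) : Set α) ⊆ vertsH H := by
  intro v hv
  simp only [coe_biUnion, id, Set.mem_iUnion] at hv
  obtain ⟨e, he, hve⟩ := hv
  exact coe_subset_vertsH (hM.1 he) hve

theorem UniformH.nonempty {r : ℕ} (hH : UniformH H r) (hr : r ≠ 0) (he : e ∈ H) :
    e.Nonempty :=
  card_pos.mp ((hH e he).symm ▸ Nat.pos_of_ne_zero hr)

theorem isMatchingH_singleton (he : e ∈ H) : IsMatchingH H {e} :=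
  ⟨by simpa using he, by simp⟩

theorem IsMatchingH.insert [DecidableEq α] (hM : IsMatchingH H M) (he : e ∈ H)
    (hdisj : ∀ f ∈ M, Disjoint e f) : IsMatchingH H (insert e M) := by
  refine ⟨by simpa [Set.insert_subset_iff] using ⟨he, hM.1⟩, ?_⟩
  rw [coe_insert]
  exact hM.2.insert fun f hf _ => ⟨hdisj f hf, (hdisj f hf).symm⟩

theorem card_insert_of_forall_disjoint [DecidableEq α] (he : e.Nonempty)
    (hdisj : ∀ f ∈ M, Disjoint e f) : (insert e M).card = M.card + 1 :=
  card_insert_of_notMem fun heM => he.ne_empty (disjoint_self.mp (hdisj e heM))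

theorem isMatchingH_pair [DecidableEq α] {f : Finset α} (he : e ∈ H) (hf : f ∈ H)
    (hef : Disjoint e f) : IsMatchingH H {e, f} :=
  (isMatchingH_singleton hf).insert he (by simpa using hef)

theorem card_pair_of_disjoint [DecidableEq α] {f : Finset α} (he : e.Nonempty)
    (hef : Disjoint e f) : ({e, f} : Finset (Finset α)).card = 2 :=
  card_pair (hef.ne he.ne_empty)

theorem card_inter_biUnion_of_orthH [DecidableEq α] {A B : Set (Finset α)} {b : Finset α}
    (hO : OrthH A B) (hM : IsMatchingH A M) (hb : b ∈ B) :
    (b ∩ M.biUnion id).card = M.card := by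
  rw [inter_biUnion, Finset.card_biUnion, sum_const_nat (m := 1) fun e he => ?_, mul_one]
  · rw [id, inter_comm]
    exact hO e (hM.1 he) b hb
  · exact fun e he f hf hef => (hM.2 he hf hef).mono inter_subset_right inter_subset_right

end Hypergraph

namespace IsLoom

variable {A B : Set (Finset V)} {M : Finset (Finset V)} {r s : ℕ}

theorem uniformH_left (hL : IsLoom r s A B) : UniformH A r :=
  hL.2.2.2.1

theorem vertsH_left_subset (hL : IsLoom r s A B) : vertsH A ⊆ vertsH B := by
  obtain ⟨-, -, -, -, -, -, hτB, hA, -⟩ := hL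
  refine vertsH_subset_iff.mpr fun a ha v hv => ?_
  rw [hA] at ha
  exact ha.2.mem_vertsH_of_minimal (fun c hc => ha.1 ▸ hτB.2 c hc) hv

theorem card_le_of_isMatchingH (hL : IsLoom r s A B) (hM : IsMatchingH A M) : M.card ≤ s := by
  obtain ⟨-, -, -, -, -, ⟨⟨c, hc, rfl⟩, -⟩, -⟩ := hL
  exact hM.card_le_of_isCoverH hc

theorem exists_disjoint (hL : IsLoom r r A B) (hr : r ≠ 1) :
    ∃ e ∈ A, ∃ f ∈ A, Disjoint e f := by
  obtain ⟨hr1, -, hO, hu, -, hτA, -, -, hB⟩ := hL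
  obtain ⟨a, ha⟩ := hτA.nonempty (by omega)
  by_contra! hint
  have haB : a ∈ B :=
    hB ▸ ⟨hu a ha, fun e he => not_disjoint_iff_nonempty_inter.mp (hint a ha e he)⟩
  have := hO a ha a haB
  rw [inter_self, hu a ha] at this
  exact hr this

theorem vertsH_union_eq_biUnion (hL : IsLoom r s A B) (hM : IsMatchingH A M)
    (hcard : M.card = s) : vertsH A ∪ vertsH B = ↑(M.biUnion id) := by
  have hBsub : vertsH B ⊆ ↑(M.biUnion id) := by
    obtain ⟨-, -, hO, -, huB, -⟩ := hL
    refine vertsH_subset_iff.mpr fun b hb => Finset.coe_subset.mpr ?_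
    refine inter_eq_left.mp (eq_of_subset_of_card_le inter_subset_left ?_)
    rw [card_inter_biUnion_of_orthH hO hM hb, hcard, huB b hb]
  exact (Set.union_subset (hL.vertsH_left_subset.trans hBsub) hBsub).antisymm
    (hM.coe_biUnion_subset.trans Set.subset_union_left)

theorem ncard_verts_of_isMatchingH (hL : IsLoom r s A B) (hM : IsMatchingH A M)
    (hcard : M.card = s) : (vertsH A ∪ vertsH B).ncard = r * s := by
  rw [hL.vertsH_union_eq_biUnion hM hcard, Set.ncard_coe_finset,
    hM.card_biUnion hL.uniformH_left, hcard, mul_comm]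

theorem exists_mem_eq_sdiff_biUnion (hL : IsLoom r s A B)
    (hV : (vertsH A ∪ vertsH B).ncard = r * s) (hM : IsMatchingH A M) (hcard : M.card + 1 = s) :
    ∃ g ∈ A, (g : Set V) = (vertsH A ∪ vertsH B) \ ↑(M.biUnion id) := by
  obtain ⟨hr, -, hO, huA, huB, -, -, hA, -⟩ := hL
  have hfin : (vertsH A ∪ vertsH B).Finite :=
    Set.finite_of_ncard_pos (hV ▸ Nat.mul_pos hr (by omega))
  set W := hfin.toFinset
  have hMW : M.biUnion id ⊆ W := by
    intro v hv
    simpa [W] using Or.inl (hM.coe_biUnion_subset hv)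
  refine ⟨W \ M.biUnion id, ?_, by simp [W]⟩
  rw [hA]
  constructor
  · rw [card_sdiff_of_subset hMW, hM.card_biUnion huA, ← Set.ncard_eq_toFinset_card _ hfin, hV,
      ← hcard]
    have : r * (M.card + 1) = M.card * r + r := by ring
    omega
  · intro b hb
    obtain ⟨v, hvb, hvM⟩ := not_subset.mp fun hsub => by
      have := card_inter_biUnion_of_orthH hO hM hb
      rw [inter_eq_left.mpr hsub, huB b hb] at this
      omega
    have hvW : v ∈ W := by
      simpa [W] using Or.inr (mem_vertsH.mpr ⟨b, hb, hvb⟩)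
    exact ⟨v, mem_inter.mpr ⟨mem_sdiff.mpr ⟨hvW, hvM⟩, hvb⟩⟩

theorem exists_mem_eq_sdiff_union (hL : IsLoom r 3 A B)
    (hV : (vertsH A ∪ vertsH B).ncard = r * 3) : ∀ e ∈ A, ∀ f ∈ A, Disjoint e f →
      ∃ g ∈ A, (g : Set V) = (vertsH A ∪ vertsH B) \ ((e : Set V) ∪ (f : Set V)) := by
  intro e he f hf hef
  have hcard := card_pair_of_disjoint (hL.uniformH_left.nonempty (by have := hL.1; omega) he) hef
  obtain ⟨g, hg, hgeq⟩ :=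
    hL.exists_mem_eq_sdiff_biUnion hV (isMatchingH_pair he hf hef) (by rw [hcard])
  exact ⟨g, hg, by simpa using hgeq⟩

theorem matchNumIs_three_of_sdiff_mem (hL : IsLoom 3 3 A B)
    (hcompl : ∀ e ∈ A, ∀ f ∈ A, Disjoint e f →
      ∃ g ∈ A, (g : Set V) = (vertsH A ∪ vertsH B) \ ((e : Set V) ∪ (f : Set V))) :
    MatchNumIs A 3 := by
  have hne : ∀ e ∈ A, e.Nonempty := fun e he => hL.uniformH_left.nonempty three_ne_zero he
  obtain ⟨e, he, f, hf, hef⟩ := hL.exists_disjoint (by norm_num)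
  obtain ⟨g, hg, hgeq⟩ := hcompl e he f hf hef
  have hg_disj : ∀ x ∈ ({e, f} : Finset (Finset V)), Disjoint g x := by
    simp only [mem_insert, mem_singleton, forall_eq_or_imp, forall_eq, ← disjoint_coe, hgeq]
    exact ⟨Set.disjoint_sdiff_left.mono_right Set.subset_union_left,
      Set.disjoint_sdiff_left.mono_right Set.subset_union_right⟩
  refine ⟨⟨_, (isMatchingH_pair he hf hef).insert hg hg_disj, ?_⟩,
    fun M hM => hL.card_le_of_isMatchingH hM⟩
  rw [card_insert_of_forall_disjoint (hne g hg) hg_disj, card_pair_of_disjoint (hne e he) hef]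

end IsLoom

/-- in a `(3,3)`-loom, the conditions `|V| = 9`, `ν(A) = 3`, and
"for all disjoint `e, f ∈ A`, `V \ (e ∪ f) ∈ A`" are pairwise equivalent. -/
theorem stmt19 (A B : Set (Finset V)) (hL : IsLoom 3 3 A B) :
    ((vertsH A ∪ vertsH B).ncard = 9 ↔ MatchNumIs A 3) ∧
    (MatchNumIs A 3 ↔
      (∀ e ∈ A, ∀ f ∈ A, Disjoint e f →
        ∃ g ∈ A, (g : Set V) = (vertsH A ∪ vertsH B) \ ((e : Set V) ∪ (f : Set V)))) ∧
    ((vertsH A ∪ vertsH B).ncard = 9 ↔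
      (∀ e ∈ A, ∀ f ∈ A, Disjoint e f →
        ∃ g ∈ A, (g : Set V) = (vertsH A ∪ vertsH B) \ ((e : Set V) ∪ (f : Set V)))) := by
  have h9_of_ν : MatchNumIs A 3 → (vertsH A ∪ vertsH B).ncard = 9 :=
    fun ⟨⟨_, hM, hcard⟩, _⟩ => hL.ncard_verts_of_isMatchingH hM hcard
  have hcompl_of_9 := hL.exists_mem_eq_sdiff_union (r := 3)
  have hν_of_compl := hL.matchNumIs_three_of_sdiff_mem
  exact ⟨⟨fun h => hν_of_compl (hcompl_of_9 h), h9_of_ν⟩,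
    ⟨fun h => hcompl_of_9 (h9_of_ν h), hν_of_compl⟩,
    ⟨hcompl_of_9, fun h => h9_of_ν (hν_of_compl h)⟩⟩
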